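/- Let G be a finite group with |G| ≤ 2^n and H a subgroup of G, h ∈ H, and α : H → ℂ with | |α_g|² − 1/|H| | ≤ 2^{-2n} for all g ∈ H, and β : G → ℂ with ∑_{x∈G} |β_x|² ≤ 1. Then (1/4)·‖ ∑_{x∈G} ∑_{g∈H} (|α_g|² − |α_{gh⁻¹}|²)·β_x · e_{xg} ‖² ≤ 2^{-2n}. (Hence the verification procedure for Group Non-Membership accepts any certificate with exponentially small probability when h actually belongs to H.) -/

import Mathlib

/-!
For each `g ∈ H` the inner sum over `x` is the right translate of `β` by `g`, whose norm is at
most `‖β‖ ≤ 1` since right translation permutes the orthonormal basis. Its coefficient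
`|α g|² − |α (g h⁻¹)|²` is at most `2 · 2^{-2n}` in absolute value, both terms being
`2^{-2n}`-close to `1/|H|`. The triangle inequality over `H` then bounds the norm by
`|H| · 2 · 2^{-2n} ≤ 2 · 2^{-n}`, and a quarter of its square is `2^{-2n}`.
-/

theorem Orthonormal.norm_sum_smul_sq {𝕜 E ι : Type*} [RCLike 𝕜] [NormedAddCommGroup E]
    [InnerProductSpace 𝕜 E] {v : ι → E} (hv : Orthonormal 𝕜 v) (l : ι → 𝕜) (s : Finset ι) :
    ‖∑ i ∈ s, l i • v i‖ ^ 2 = ∑ i ∈ s, ‖l i‖ ^ 2 := by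
  rw [@norm_sq_eq_re_inner 𝕜, hv.inner_sum, map_sum]
  simp [RCLike.conj_mul]

theorem norm_sum_sum_smul_single_mul_le {𝕜 G ι : Type*} [RCLike 𝕜] [Mul G] [IsRightCancelMul G]
    [Fintype G] [DecidableEq G] [Fintype ι] (c : ι → 𝕜) (k : ι → G) (β : G → 𝕜)
    (hβ : ∑ x, ‖β x‖ ^ 2 ≤ 1) :
    ‖∑ x, ∑ i, (c i * β x) • EuclideanSpace.single (x * k i) (1 : 𝕜)‖ ≤ ∑ i, ‖c i‖ := by
  rw [Finset.sum_comm]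
  refine (norm_sum_le _ _).trans (Finset.sum_le_sum fun i _ => ?_)
  have hv : Orthonormal 𝕜 fun x => EuclideanSpace.single (x * k i) (1 : 𝕜) :=
    EuclideanSpace.orthonormal_single.comp _ (mul_left_injective (k i))
  have hβi : ‖∑ x, β x • EuclideanSpace.single (x * k i) (1 : 𝕜)‖ ≤ 1 := by
    rw [← sq_le_one_iff₀ (norm_nonneg _), hv.norm_sum_smul_sq]
    exact hβ
  simp_rw [mul_smul, ← Finset.smul_sum, norm_smul]
  exact mul_le_of_le_one_right (norm_nonneg _) hβi

theorem sq_two_pow_mul_zpow_neg (n : ℕ) : ((2 : ℝ) ^ n) ^ 2 * (2 : ℝ) ^ (-(2 * n : ℤ)) = 1 := by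
  rw [← pow_mul, ← zpow_natCast, ← zpow_add₀ two_ne_zero]
  simp [mul_comm]

/-- Let `G` be a finite group with `|G| ≤ 2^n`, `H` a subgroup, `h ∈ H`,
`α : H → ℂ` with `| |α g|² − 1/|H| | ≤ 2^{-2n}` for all `g ∈ H`, and `β : G → ℂ`
with `∑_x |β x|² ≤ 1`.  Then
`(1/4)‖ ∑_{x ∈ G} ∑_{g ∈ H} (|α g|² − |α (g h⁻¹)|²) β x · e_{xg} ‖² ≤ 2^{-2n}`. -/
theorem acceptance_prob_exp_small {G : Type*} [Group G] [Fintype G] [DecidableEq G]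
    (n : ℕ) (hG : Fintype.card G ≤ 2 ^ n)
    (H : Subgroup G) [DecidablePred (· ∈ H)] (h : H)
    (α : H → ℂ)
    (hα : ∀ g : H, |‖α g‖ ^ 2 - 1 / (Fintype.card H : ℝ)|
      ≤ (2 : ℝ) ^ (-(2 * n : ℤ)))
    (β : G → ℂ) (hβ : ∑ x : G, ‖β x‖ ^ 2 ≤ 1) :
    (1 / 4 : ℝ) *
      ‖∑ x : G, ∑ g : H,
        (((‖α g‖ ^ 2 - ‖α (g * h⁻¹)‖ ^ 2 : ℝ) : ℂ) * β x) •
          EuclideanSpace.single (x * (g : G)) (1 : ℂ)‖ ^ 2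
      ≤ (2 : ℝ) ^ (-(2 * n : ℤ)) := by
  set δ : ℝ := (2 : ℝ) ^ (-(2 * n : ℤ))
  have hcoeff (g : H) : ‖((‖α g‖ ^ 2 - ‖α (g * h⁻¹)‖ ^ 2 : ℝ) : ℂ)‖ ≤ 2 * δ := by
    rw [Complex.norm_real, Real.norm_eq_abs, two_mul]
    exact (abs_sub_le _ (1 / (Fintype.card H : ℝ)) _).trans
      (add_le_add (hα g) (abs_sub_comm (‖α (g * h⁻¹)‖ ^ 2) _ ▸ hα _))
  have hsum : ∑ g : H, ‖((‖α g‖ ^ 2 - ‖α (g * h⁻¹)‖ ^ 2 : ℝ) : ℂ)‖ ≤ 2 ^ n * (2 * δ) :=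
    calc _ ≤ ∑ _g : H, 2 * δ := Finset.sum_le_sum fun g _ => hcoeff g
      _ = Fintype.card H * (2 * δ) := by simp
      _ ≤ 2 ^ n * (2 * δ) := by
        gcongr
        exact_mod_cast (Fintype.card_subtype_le _).trans hG
  calc (1 / 4 : ℝ) * ‖_‖ ^ 2 ≤ 1 / 4 * (2 ^ n * (2 * δ)) ^ 2 := by
        gcongr
        exact (norm_sum_sum_smul_single_mul_le _ (fun g : H => (g : G)) β hβ).trans hsum
    _ = (((2 : ℝ) ^ n) ^ 2 * δ) * δ := by ring
    _ = δ := by rw [sq_two_pow_mul_zpow_neg, one_mul]
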